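/- arXiv:2105.10658 — 2 statements merged into one kernel-verified Lean document; each statement's English description precedes it below -/
import Mathlib

section
/- Let ψ ∈ H_A ⊗ H_B be a unit vector and A, U ∈ B(H_A), B ∈ B(H_B) be unitaries with ⟨ψ, (U ⊗ I)ψ⟩ ≥ 1 − ε (real) and ⟨ψ, (A ⊗ B)ψ⟩ ≥ 1 − ε (real), for some ε ≥ 0. Then Re⟨ψ, (AUA* ⊗ I)ψ⟩ ≥ 1 − 9ε. -/
open Kronecker

/-- Action of a matrix on a Euclidean-space vector. -/
noncomputable def act {ι κ : Type*} [Fintype ι] (M : Matrix κ ι ℂ) (x : EuclideanSpace ℂ ι) :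
    EuclideanSpace ℂ κ := WithLp.toLp 2 (fun k => ∑ j, M k j * x j)

/-!
Write `d(T) = ‖T ψ - ψ‖`. For a unitary `T` and a unit vector `ψ`,
`d(T)² = 2 - 2 Re⟨ψ, T ψ⟩`, so both hypotheses say `d ≤ √(2ε)`. For an isometry `S`,
`S T ψ - ψ = S (T ψ - ψ) + (S ψ - ψ)` gives `d(S T) ≤ d(T) + d(S)`, and `d(W⋆) = d(W)`.
Since `AUA⋆ ⊗ I = W V W⋆` with `W = A ⊗ B`, `V = U ⊗ I`, we get
`d(AUA⋆ ⊗ I) ≤ d(V) + 2 d(W) ≤ 3 √(2ε)`, i.e. `Re⟨ψ, (AUA⋆ ⊗ I) ψ⟩ ≥ 1 - 9ε`.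
-/

open ContinuousLinearMap

section Normed

variable {𝕜 F : Type*} [NontriviallyNormedField 𝕜] [SeminormedAddCommGroup F] [NormedSpace 𝕜 F]

theorem norm_mul_apply_sub_self_le {s : F →L[𝕜] F} (hs : ∀ y, ‖s y‖ = ‖y‖) (t : F →L[𝕜] F)
    (x : F) : ‖(s * t) x - x‖ ≤ ‖t x - x‖ + ‖s x - x‖ := by
  have hsplit : (s * t) x - x = s (t x - x) + (s x - x) := by
    rw [map_sub, mul_apply_eq_comp]; abel
  calc ‖(s * t) x - x‖ ≤ ‖s (t x - x)‖ + ‖s x - x‖ := hsplit ▸ norm_add_le _ _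
    _ = ‖t x - x‖ + ‖s x - x‖ := by rw [hs]

end Normed

section InnerProduct

variable {𝕜 E : Type*} [RCLike 𝕜] [NormedAddCommGroup E] [InnerProductSpace 𝕜 E] [CompleteSpace E]

theorem norm_apply_sub_self_sq_of_mem_unitary {u : E →L[𝕜] E} (hu : u ∈ unitary (E →L[𝕜] E))
    {x : E} (hx : ‖x‖ = 1) : ‖u x - x‖ ^ 2 = 2 - 2 * RCLike.re (inner 𝕜 x (u x)) := by
  rw [@norm_sub_sq 𝕜, norm_map_of_mem_unitary hu, hx, inner_re_symm]
  ring

theorem norm_star_apply_sub_self_of_mem_unitary {u : E →L[𝕜] E}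
    (hu : u ∈ unitary (E →L[𝕜] E)) (x : E) : ‖star u x - x‖ = ‖u x - x‖ := by
  have hcancel : u (star u x) = x := by
    rw [← mul_apply_eq_comp, Unitary.mul_star_self_of_mem hu, one_apply_eq_self]
  rw [← norm_map_of_mem_unitary hu, map_sub, hcancel, norm_sub_rev]

theorem norm_conj_apply_sub_self_le {u v : E →L[𝕜] E} (hu : u ∈ unitary (E →L[𝕜] E))
    (hv : v ∈ unitary (E →L[𝕜] E)) (x : E) :
    ‖(u * v * star u) x - x‖ ≤ ‖v x - x‖ + 2 * ‖u x - x‖ := by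
  have hv_star := norm_mul_apply_sub_self_le (norm_map_of_mem_unitary hv) (star u) x
  rw [norm_star_apply_sub_self_of_mem_unitary hu] at hv_star
  calc ‖(u * v * star u) x - x‖ = ‖(u * (v * star u)) x - x‖ := by rw [mul_assoc]
    _ ≤ ‖(v * star u) x - x‖ + ‖u x - x‖ :=
        norm_mul_apply_sub_self_le (norm_map_of_mem_unitary hu) _ x
    _ ≤ ‖v x - x‖ + 2 * ‖u x - x‖ := by linarith

theorem one_sub_nine_mul_le_re_inner_conj {u v : E →L[𝕜] E} (hu : u ∈ unitary (E →L[𝕜] E))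
    (hv : v ∈ unitary (E →L[𝕜] E)) {x : E} (hx : ‖x‖ = 1) {ε : ℝ}
    (hvx : 1 - ε ≤ RCLike.re (inner 𝕜 x (v x))) (hux : 1 - ε ≤ RCLike.re (inner 𝕜 x (u x))) :
    1 - 9 * ε ≤ RCLike.re (inner 𝕜 x ((u * v * star u) x)) := by
  have huvu : u * v * star u ∈ unitary (E →L[𝕜] E) :=
    mul_mem (mul_mem hu hv) (Unitary.star_mem hu)
  have hv_sq := norm_apply_sub_self_sq_of_mem_unitary hv hx
  have hu_sq := norm_apply_sub_self_sq_of_mem_unitary hu hx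
  have huvu_sq := norm_apply_sub_self_sq_of_mem_unitary huvu hx
  have htri := norm_conj_apply_sub_self_le hu hv x
  have hsq := pow_le_pow_left₀ (norm_nonneg _) htri 2
  nlinarith [sq_nonneg (‖v x - x‖ - ‖u x - x‖)]

end InnerProduct

theorem act_eq_toEuclideanCLM {ι : Type*} [Fintype ι] [DecidableEq ι] (M : Matrix ι ι ℂ)
    (x : EuclideanSpace ℂ ι) : act M x = Matrix.toEuclideanCLM (𝕜 := ℂ) M x :=
  rfl

theorem Matrix.mul_mul_star_kronecker_one {R m n : Type*} [CommSemiring R] [StarRing R]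
    [Fintype m] [Fintype n] [DecidableEq n] (A U : Matrix m m R) {B : Matrix n n R}
    (hB : B ∈ unitary (Matrix n n R)) :
    (A * U * star A) ⊗ₖ (1 : Matrix n n R) = (A ⊗ₖ B) * (U ⊗ₖ 1) * star (A ⊗ₖ B) := by
  have hBB : B * B.conjTranspose = 1 := Unitary.mul_star_self_of_mem hB
  rw [star_eq_conjTranspose, star_eq_conjTranspose, conjTranspose_kronecker,
    ← mul_kronecker_mul, ← mul_kronecker_mul, mul_one, hBB]

theorem stmt11_general {m n : ℕ} (ε : ℝ)
    (A U : Matrix (Fin m) (Fin m) ℂ) (B : Matrix (Fin n) (Fin n) ℂ)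
    (hA : A ∈ unitary (Matrix (Fin m) (Fin m) ℂ))
    (hU : U ∈ unitary (Matrix (Fin m) (Fin m) ℂ))
    (hB : B ∈ unitary (Matrix (Fin n) (Fin n) ℂ))
    (ψ : EuclideanSpace ℂ (Fin m × Fin n)) (hψ : ‖ψ‖ = 1)
    (h1re : 1 - ε ≤ (inner ℂ ψ (act (U ⊗ₖ (1 : Matrix (Fin n) (Fin n) ℂ)) ψ) : ℂ).re)
    (h2re : 1 - ε ≤ (inner ℂ ψ (act (A ⊗ₖ B) ψ) : ℂ).re) :
    1 - 9 * ε ≤ (inner ℂ ψ (act ((A * U * star A) ⊗ₖ (1 : Matrix (Fin n) (Fin n) ℂ)) ψ) : ℂ).re := by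
  have hW := Unitary.map_mem (Matrix.toEuclideanCLM (𝕜 := ℂ) (n := Fin m × Fin n))
    (Matrix.kronecker_mem_unitary hA hB)
  have hV := Unitary.map_mem (Matrix.toEuclideanCLM (𝕜 := ℂ) (n := Fin m × Fin n))
    (Matrix.kronecker_mem_unitary hU (one_mem (unitary (Matrix (Fin n) (Fin n) ℂ))))
  rw [act_eq_toEuclideanCLM] at h1re h2re ⊢
  rw [Matrix.mul_mul_star_kronecker_one A U hB, map_mul, map_mul, map_star]
  exact one_sub_nine_mul_le_re_inner_conj hW hV hψ h1re h2re

/-- for unitaries `A, U` on `H_A`, `B` on `H_B` and a unit vector `ψ` with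
`⟨ψ, (U ⊗ I)ψ⟩ ≥ 1 − ε` (real) and `⟨ψ, (A ⊗ B)ψ⟩ ≥ 1 − ε` (real), one has
`Re⟨ψ, (AUA* ⊗ I)ψ⟩ ≥ 1 − 9ε`. -/
theorem stmt11 {m n : ℕ} (ε : ℝ) (hε : 0 ≤ ε)
    (A U : Matrix (Fin m) (Fin m) ℂ) (B : Matrix (Fin n) (Fin n) ℂ)
    (hA : A ∈ unitary (Matrix (Fin m) (Fin m) ℂ))
    (hU : U ∈ unitary (Matrix (Fin m) (Fin m) ℂ))
    (hB : B ∈ unitary (Matrix (Fin n) (Fin n) ℂ))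
    (ψ : EuclideanSpace ℂ (Fin m × Fin n)) (hψ : ‖ψ‖ = 1)
    (h1re : 1 - ε ≤ (inner ℂ ψ (act (U ⊗ₖ (1 : Matrix (Fin n) (Fin n) ℂ)) ψ) : ℂ).re)
    (h1im : (inner ℂ ψ (act (U ⊗ₖ (1 : Matrix (Fin n) (Fin n) ℂ)) ψ) : ℂ).im = 0)
    (h2re : 1 - ε ≤ (inner ℂ ψ (act (A ⊗ₖ B) ψ) : ℂ).re)
    (h2im : (inner ℂ ψ (act (A ⊗ₖ B) ψ) : ℂ).im = 0) :
    1 - 9 * ε ≤ (inner ℂ ψ (act ((A * U * star A) ⊗ₖ (1 : Matrix (Fin n) (Fin n) ℂ)) ψ) : ℂ).re :=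
  stmt11_general ε A U B hA hU hB ψ hψ h1re h2re
end

section
/- Let ψ ∈ H_A ⊗ H_B be a unit vector, A a self-adjoint operator on H_A with ‖A‖ ≤ 1, and ⟨ψ, (A ⊗ I)ψ⟩ ≥ 1 − ε for some ε ≥ 0. If ψ = φ + φ' with φ and φ' obtained by projecting each Schmidt term of ψ onto two orthogonal invariant summands (so φ = Σᵢ αᵢλᵢ vᵢ ⊗ wᵢ with αᵢ ∈ [0,1]), then ⟨φ, (A ⊗ I)φ⟩ ≥ ‖φ‖² − ε. -/
open Kronecker

/-- Elementary tensor of two Euclidean-space vectors. -/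
noncomputable def tp {ι κ : Type*} (v : EuclideanSpace ℂ ι) (w : EuclideanSpace ℂ κ) :
    EuclideanSpace ℂ (ι × κ) := WithLp.toLp 2 (fun p : ι × κ => v p.1 * w p.2)

/-!
Put `aᵢ = Re ⟪vᵢ, A vᵢ⟫ ≤ 1` (as `A` is a contraction). Both quadratic forms are diagonal in the
Schmidt basis, since `A ⊗ I` leaves the orthonormal `wᵢ` alone and kills the cross terms:
`Re ⟪ψ, (A ⊗ I) ψ⟫ = ∑ λᵢ² aᵢ` and `Re ⟪φ, (A ⊗ I) φ⟫ = ∑ αᵢ² λᵢ² aᵢ`. Hence, termwise,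
`‖φ‖² - Re ⟪φ, (A ⊗ I) φ⟫ = ∑ αᵢ² λᵢ² (1 - aᵢ) ≤ ∑ λᵢ² (1 - aᵢ) = 1 - Re ⟪ψ, (A ⊗ I) ψ⟫ ≤ ε`.
-/

section

variable {ι κ β : Type*} [Fintype ι]

lemma act_eq_toLpLin [DecidableEq ι] (M : Matrix κ ι ℂ) (x : EuclideanSpace ℂ ι) :
    act M x = Matrix.toLpLin 2 2 M x := rfl

lemma act_sum [Fintype β] (M : Matrix κ ι ℂ) (c : β → ℂ) (y : β → EuclideanSpace ℂ ι) :
    act M (∑ b, c b • y b) = ∑ b, c b • act M (y b) := by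
  classical
  simp only [act_eq_toLpLin, map_sum, map_smul]

lemma inner_tp [Fintype κ] (a c : EuclideanSpace ℂ ι) (b d : EuclideanSpace ℂ κ) :
    inner ℂ (tp a b) (tp c d) = inner ℂ a c * inner ℂ b d := by
  simp only [PiLp.inner_apply, RCLike.inner_apply, tp, Fintype.sum_prod_type, map_mul,
    Finset.sum_mul_sum]
  exact Finset.sum_congr rfl fun i _ => Finset.sum_congr rfl fun k _ => by ring

lemma act_kronecker_one_tp [Fintype κ] [DecidableEq κ] (A : Matrix ι ι ℂ) (x : EuclideanSpace ℂ ι)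
    (y : EuclideanSpace ℂ κ) : act (A ⊗ₖ (1 : Matrix κ κ ℂ)) (tp x y) = tp (act A x) y := by
  ext p
  simp only [act, tp, Matrix.kroneckerMap_apply, Fintype.sum_prod_type, Matrix.one_apply,
    mul_ite, mul_one, mul_zero, ite_mul, zero_mul, Finset.sum_ite_eq, Finset.mem_univ, if_true,
    Finset.sum_mul]
  exact Finset.sum_congr rfl fun j _ => by ring

lemma orthonormal_tp [Fintype κ] {v : β → EuclideanSpace ℂ ι} {w : β → EuclideanSpace ℂ κ}
    (hv : Orthonormal ℂ v) (hw : Orthonormal ℂ w) : Orthonormal ℂ fun b => tp (v b) (w b) := by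
  classical
  rw [orthonormal_iff_ite] at hv hw ⊢
  intro i j
  rw [inner_tp, hv, hw]
  split_ifs <;> simp

lemma re_inner_sum_tp_act_kronecker_one [Fintype κ] [DecidableEq κ] [Fintype β] (A : Matrix ι ι ℂ)
    (c : β → ℝ) (v : β → EuclideanSpace ℂ ι) (w : β → EuclideanSpace ℂ κ) (hw : Orthonormal ℂ w) :
    (inner ℂ (∑ b, (c b : ℂ) • tp (v b) (w b))
        (act (A ⊗ₖ (1 : Matrix κ κ ℂ)) (∑ b, (c b : ℂ) • tp (v b) (w b)))).re
      = ∑ b, c b ^ 2 * (inner ℂ (v b) (act A (v b))).re := by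
  classical
  rw [act_sum, sum_inner, Complex.re_sum]
  rw [orthonormal_iff_ite] at hw
  refine Finset.sum_congr rfl fun b _ => ?_
  simp only [inner_sum, inner_smul_left, inner_smul_right, act_kronecker_one_tp, inner_tp, hw,
    mul_ite, mul_one, mul_zero, Finset.sum_ite_eq, Finset.mem_univ, if_true, Complex.conj_ofReal]
  rw [← mul_assoc, ← Complex.ofReal_mul, Complex.re_ofReal_mul, sq]

end

lemma Orthonormal.norm_sum_smul_sq {𝕜 E ι : Type*} [RCLike 𝕜] [NormedAddCommGroup E]
    [InnerProductSpace 𝕜 E] [Fintype ι] {e : ι → E} (he : Orthonormal 𝕜 e) (c : ι → 𝕜) :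
    ‖∑ i, c i • e i‖ ^ 2 = ∑ i, ‖c i‖ ^ 2 := by
  rw [@norm_sq_eq_re_inner 𝕜, he.inner_sum, map_sum]
  simp only [RCLike.conj_mul, ← RCLike.ofReal_pow, RCLike.ofReal_re]

lemma re_inner_le_norm_sq_of_norm_le {𝕜 E : Type*} [RCLike 𝕜] [NormedAddCommGroup E]
    [InnerProductSpace 𝕜 E] {x y : E} (h : ‖y‖ ≤ ‖x‖) : RCLike.re (inner 𝕜 x y) ≤ ‖x‖ ^ 2 :=
  (re_inner_le_norm x y).trans (by rw [sq]; gcongr)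

lemma sum_sub_sum_mul_le_of_le {ι : Type*} (s : Finset ι) {p q a : ι → ℝ}
    (hpq : ∀ i ∈ s, p i ≤ q i) (ha : ∀ i ∈ s, a i ≤ 1) :
    ∑ i ∈ s, p i - ∑ i ∈ s, p i * a i ≤ ∑ i ∈ s, q i - ∑ i ∈ s, q i * a i := by
  simp only [← Finset.sum_sub_distrib, ← mul_one_sub]
  exact Finset.sum_le_sum fun i hi =>
    mul_le_mul_of_nonneg_right (hpq i hi) (sub_nonneg.mpr (ha i hi))

theorem stmt12_general {m n : ℕ} (ε : ℝ)
    (A : Matrix (Fin m) (Fin m) ℂ)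
    (hAnorm : ∀ x : EuclideanSpace ℂ (Fin m), ‖act A x‖ ≤ ‖x‖)
    {ι : Type*} [Fintype ι] (lam : ι → ℝ)
    (v : ι → EuclideanSpace ℂ (Fin m)) (w : ι → EuclideanSpace ℂ (Fin n))
    (hv : Orthonormal ℂ v) (hw : Orthonormal ℂ w)
    (ψ : EuclideanSpace ℂ (Fin m × Fin n))
    (hψ : ψ = ∑ i, (lam i : ℂ) • tp (v i) (w i))
    (hunit : ‖ψ‖ = 1)
    (h : 1 - ε ≤ (inner ℂ ψ (act (A ⊗ₖ (1 : Matrix (Fin n) (Fin n) ℂ)) ψ) : ℂ).re)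
    (α : ι → ℝ) (hα0 : ∀ i, 0 ≤ α i) (hα1 : ∀ i, α i ≤ 1)
    (φ : EuclideanSpace ℂ (Fin m × Fin n))
    (hφ : φ = ∑ i, ((α i : ℂ) * (lam i : ℂ)) • tp (v i) (w i)) :
    ‖φ‖ ^ 2 - ε ≤ (inner ℂ φ (act (A ⊗ₖ (1 : Matrix (Fin n) (Fin n) ℂ)) φ) : ℂ).re := by
  have hvAv : ∀ i, (inner ℂ (v i) (act A (v i))).re ≤ 1 := fun i => by
    simpa [hv.1 i] using re_inner_le_norm_sq_of_norm_le (𝕜 := ℂ) (hAnorm (v i))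
  have hφ' : φ = ∑ i, ((α i * lam i : ℝ) : ℂ) • tp (v i) (w i) := by
    simpa only [Complex.ofReal_mul] using hφ
  have hnorm (c : ι → ℝ) : ‖∑ i, (c i : ℂ) • tp (v i) (w i)‖ ^ 2 = ∑ i, c i ^ 2 := by
    simp only [(orthonormal_tp hv hw).norm_sum_smul_sq, Complex.norm_real, Real.norm_eq_abs, sq_abs]
  have hlam_sq : ∑ i, lam i ^ 2 = 1 := by rw [← hnorm, ← hψ, hunit, one_pow]
  have hαlam : ∀ i ∈ Finset.univ, (α i * lam i) ^ 2 ≤ lam i ^ 2 := fun i _ => by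
    rw [mul_pow]
    exact mul_le_of_le_one_left (sq_nonneg _) (pow_le_one₀ (hα0 i) (hα1 i))
  rw [hψ, re_inner_sum_tp_act_kronecker_one A lam v w hw] at h
  rw [hφ', re_inner_sum_tp_act_kronecker_one A _ v w hw, hnorm]
  linarith [sum_sub_sum_mul_le_of_le Finset.univ hαlam fun i _ => hvAv i]

/-- let `ψ = ∑ᵢ λᵢ vᵢ ⊗ wᵢ` be a unit vector (Schmidt decomposition, `λᵢ > 0`,
`v`, `w` orthonormal), `A` self-adjoint with `‖A‖ ≤ 1`, and `⟨ψ, (A ⊗ I)ψ⟩ ≥ 1 − ε`.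
If `φ = ∑ᵢ αᵢλᵢ vᵢ ⊗ wᵢ` with `αᵢ ∈ [0,1]` (the projection of `ψ` onto an invariant
summand), then `⟨φ, (A ⊗ I)φ⟩ ≥ ‖φ‖² − ε`. -/
theorem stmt12 {m n : ℕ} (ε : ℝ) (hε : 0 ≤ ε)
    (A : Matrix (Fin m) (Fin m) ℂ) (hA : A.IsHermitian)
    (hAnorm : ∀ x : EuclideanSpace ℂ (Fin m), ‖act A x‖ ≤ ‖x‖)
    {ι : Type*} [Fintype ι] (lam : ι → ℝ) (hlam : ∀ i, 0 < lam i)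
    (v : ι → EuclideanSpace ℂ (Fin m)) (w : ι → EuclideanSpace ℂ (Fin n))
    (hv : Orthonormal ℂ v) (hw : Orthonormal ℂ w)
    (ψ : EuclideanSpace ℂ (Fin m × Fin n))
    (hψ : ψ = ∑ i, (lam i : ℂ) • tp (v i) (w i))
    (hunit : ‖ψ‖ = 1)
    (h : 1 - ε ≤ (inner ℂ ψ (act (A ⊗ₖ (1 : Matrix (Fin n) (Fin n) ℂ)) ψ) : ℂ).re)
    (α : ι → ℝ) (hα0 : ∀ i, 0 ≤ α i) (hα1 : ∀ i, α i ≤ 1)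
    (φ : EuclideanSpace ℂ (Fin m × Fin n))
    (hφ : φ = ∑ i, ((α i : ℂ) * (lam i : ℂ)) • tp (v i) (w i)) :
    ‖φ‖ ^ 2 - ε ≤ (inner ℂ φ (act (A ⊗ₖ (1 : Matrix (Fin n) (Fin n) ℂ)) φ) : ℂ).re :=
  stmt12_general ε A hAnorm lam v w hv hw ψ hψ hunit h α hα0 hα1 φ hφ
end
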